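/- arXiv:2406.06123 — 3 statements merged into one kernel-verified Lean document; each statement's English description precedes it below -/
import Mathlib

section
/- Let (Δ, 𝒜, μ) be a probability space and f : Δ → Δ a measurable measure-preserving map. Let m, χ ∈ L^∞(μ; ℝ) with E[m | f^{-1}𝒜] = 0 μ-almost everywhere, and set Φ = m + χ∘f − χ. Then there exist constants a > 0 and C > 0 such that for every x > 0 and every n ≥ 1, μ( max_{1≤k≤n} |Σ_{j=0}^{k−1} Φ ∘ f^j| ≥ x ) ≤ C·exp(−a x² / n). -/
open MeasureTheory Real Finset
open scoped ENNReal NNReal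

section AuxiliaryLemmas
variable {Δ : Type*} [mΔ : MeasurableSpace Δ] {μ : Measure Δ} [IsProbabilityMeasure μ]

lemma integrable_of_bdd {F : Δ → ℝ} (h : AEStronglyMeasurable F μ) {C : ℝ}
    (hC : ∀ z, |F z| ≤ C) : Integrable F μ :=
  (memLp_top_of_bound h C (Filter.Eventually.of_forall (by simpa using hC))).integrable le_top

lemma exp_le_one_add_add_sq {u : ℝ} (h : |u| ≤ 1) : Real.exp u ≤ 1 + u + u ^ 2 := by
  have h2 := Real.exp_bound h (n := 2) (by norm_num)
  have hs : ∑ i ∈ Finset.range 2, u ^ i / (Nat.factorial i) = 1 + u := by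
    simp [Finset.sum_range_succ]
  rw [hs] at h2
  norm_num at h2
  have h3 := (abs_le.mp h2).2
  nlinarith [sq_abs u, sq_nonneg u, abs_nonneg u]

lemma condexp_comp_of_measurePreserving {f g : Δ → Δ} (hf : Measurable f)
    (hg : MeasurePreserving g μ μ) {h : Δ → ℝ} (hsm : StronglyMeasurable h)
    {C : ℝ} (hbd : ∀ z, |h z| ≤ C) :
    μ[h ∘ g | (mΔ.comap f).comap g] =ᵐ[μ] (μ[h | mΔ.comap f]) ∘ g := by
  have h𝔪 : mΔ.comap f ≤ mΔ := measurable_iff_comap_le.mp hf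
  have hm : (mΔ.comap f).comap g ≤ mΔ :=
    (MeasurableSpace.comap_mono h𝔪).trans (measurable_iff_comap_le.mp hg.measurable)
  have hint : Integrable h μ := integrable_of_bdd hsm.aestronglyMeasurable hbd
  have hintg : Integrable (h ∘ g) μ := integrable_of_bdd
    ((hsm.comp_measurable hg.measurable).aestronglyMeasurable) (fun z => hbd _)
  have hcand_int : Integrable ((μ[h | mΔ.comap f]) ∘ g) μ := by
    have h1 : Integrable (μ[h | mΔ.comap f]) (μ.map g) := by
      rw [hg.map_eq]; exact integrable_condExp
    exact (integrable_map_measure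
      (by rw [hg.map_eq]
          exact (stronglyMeasurable_condExp.mono h𝔪).aestronglyMeasurable)
      hg.measurable.aemeasurable).mp h1
  have key : ∀ (F : Δ → ℝ), Integrable F μ → ∀ (A : Set Δ), MeasurableSet A →
      ∫ z in g ⁻¹' A, F (g z) ∂μ = ∫ z in A, F z ∂μ := by
    intro F hF A hA
    rw [← integral_indicator (hg.measurable hA), ← integral_indicator hA]
    calc ∫ z, (g ⁻¹' A).indicator (F ∘ g) z ∂μ
        = ∫ z, ((A.indicator F) ∘ g) z ∂μ := by simp only [Set.indicator_comp_right, Function.comp]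
      _ = ∫ z, A.indicator F z ∂(μ.map g) :=
          (integral_map hg.measurable.aemeasurable
            (by rw [hg.map_eq]; exact hF.aestronglyMeasurable.indicator hA)).symm
      _ = ∫ z, A.indicator F z ∂μ := by rw [hg.map_eq]
  refine (ae_eq_condExp_of_forall_setIntegral_eq hm hintg
    (fun s _ _ => hcand_int.integrableOn) ?_ ?_).symm
  · rintro s ⟨A, hA, rfl⟩ -
    have hA' : MeasurableSet A := h𝔪 _ hA
    calc ∫ z in g ⁻¹' A, ((μ[h | mΔ.comap f]) ∘ g) z ∂μ
        = ∫ z in A, (μ[h | mΔ.comap f]) z ∂μ := key _ integrable_condExp A hA'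
      _ = ∫ z in A, h z ∂μ := setIntegral_condExp h𝔪 hint hA
      _ = ∫ z in g ⁻¹' A, (h ∘ g) z ∂μ := (key _ hint A hA').symm
  · exact (stronglyMeasurable_condExp.comp_measurable
      (measurable_iff_comap_le.mpr le_rfl)).aestronglyMeasurable

lemma core_maximal (f : Δ → Δ) (hf : MeasurePreserving f μ μ)
    (m₁ : Δ → ℝ) (hsm : StronglyMeasurable m₁) {R : ℝ} (hR : 0 < R)
    (hbd : ∀ z, |m₁ z| ≤ R) (hker : μ[m₁ | mΔ.comap f] =ᵐ[μ] 0)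
    {n : ℕ} (hn : 1 ≤ n) {y : ℝ} (hy : 0 < y) :
    μ {z | y ≤ (Finset.range (n + 1)).sup' Finset.nonempty_range_add_one
        (fun k => ∑ j ∈ Finset.Ico (n - k) n, m₁ (f^[j] z))} ≤
      ENNReal.ofReal (Real.exp (-(y ^ 2) / (4 * n * R ^ 2))) := by
  have hit : ∀ j : ℕ, MeasurePreserving f^[j] μ μ := fun j => hf.iterate j
  have hle : ∀ j : ℕ, mΔ.comap f^[j] ≤ mΔ := fun j =>
    measurable_iff_comap_le.mp (hit j).measurable
  have hmono : ∀ i j : ℕ, i ≤ j → mΔ.comap f^[j] ≤ mΔ.comap f^[i] := by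
    intro i j hij
    have hji : j = (j - i) + i := by omega
    have hiter : f^[j] = f^[j - i] ∘ f^[i] := by
      conv_lhs => rw [hji, Function.iterate_add]
    rw [hiter, ← MeasurableSpace.comap_comp]
    exact MeasurableSpace.comap_mono (hle (j - i))
  set ℱ : Filtration ℕ mΔ :=
    ⟨fun k => mΔ.comap f^[n - k],
      fun i j hij => hmono (n - j) (n - i) (Nat.sub_le_sub_left hij n),
      fun k => hle _⟩ with hℱdef
  set T : ℕ → Δ → ℝ := fun k z => ∑ j ∈ Finset.Ico (n - k) n, m₁ (f^[j] z) with hTdef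
  have hsmj : ∀ j : ℕ, StronglyMeasurable[mΔ.comap f^[j]] fun z => m₁ (f^[j] z) :=
    fun j => hsm.comp_measurable (measurable_iff_comap_le.mpr le_rfl)
  have hTsm : ∀ k, StronglyMeasurable[ℱ k] (T k) := by
    intro k
    apply Finset.stronglyMeasurable_fun_sum
    intro j hj
    exact (hsmj j).mono (hmono (n - k) j (Finset.mem_Ico.mp hj).1)
  have hn0 : (0:ℝ) < n := by exact_mod_cast hn
  have hTbd : ∀ k z, |T k z| ≤ n * R := by
    intro k z
    calc |T k z| ≤ ∑ j ∈ Finset.Ico (n - k) n, |m₁ (f^[j] z)| :=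
          Finset.abs_sum_le_sum_abs _ _
      _ ≤ ∑ _j ∈ Finset.Ico (n - k) n, R := Finset.sum_le_sum fun j _ => hbd _
      _ = ((Finset.Ico (n - k) n).card : ℝ) * R := by
          rw [Finset.sum_const, nsmul_eq_mul]
      _ ≤ n * R := by
          apply mul_le_mul_of_nonneg_right _ hR.le
          rw [Nat.card_Ico]
          exact_mod_cast Nat.sub_le n (n - k)
  by_cases hycase : y ≤ 2 * n * R
  swap
  · push_neg at hycase
    have hempty : {z | y ≤ (Finset.range (n + 1)).sup' Finset.nonempty_range_add_one
        (fun k => T k z)} = ∅ := by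
      ext z
      simp only [Set.mem_setOf_eq, Set.mem_empty_iff_false, iff_false, not_le]
      refine lt_of_le_of_lt ?_ (by nlinarith : n * R < y)
      apply Finset.sup'_le
      intro k _
      exact (abs_le.mp (hTbd k z)).2
    rw [hempty]
    simp
  -- main case
  set lam : ℝ := y / (2 * n * R ^ 2) with hlamdef
  have hlam : 0 < lam := by positivity
  have hlamR : lam * R ≤ 1 := by
    rw [hlamdef, div_mul_eq_mul_div, div_le_one (by positivity)]
    nlinarith
  set c : ℝ := 1 + lam ^ 2 * R ^ 2 with hcdef
  have hc1 : (1:ℝ) ≤ c := by nlinarith [sq_nonneg (lam * R)]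
  set G : ℕ → Δ → ℝ := fun k z => Real.exp (lam * T k z) with hGdef
  have hGsm : ∀ k, StronglyMeasurable[ℱ k] (G k) := fun k =>
    Real.continuous_exp.comp_stronglyMeasurable ((hTsm k).const_mul lam)
  have hGpos : ∀ k z, 0 < G k z := fun k z => Real.exp_pos _
  have hGbd : ∀ k z, |G k z| ≤ Real.exp (lam * (n * R)) := by
    intro k z
    rw [abs_of_pos (hGpos k z)]
    apply Real.exp_le_exp.mpr
    exact mul_le_mul_of_nonneg_left ((abs_le.mp (hTbd k z)).2) hlam.le
  have hGint : ∀ k, Integrable (G k) μ := fun k =>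
    integrable_of_bdd ((hGsm k).mono (ℱ.le k)).aestronglyMeasurable (hGbd k)
  have hkey : ∀ k, k < n →
      (G k ≤ᵐ[μ] μ[G (k + 1)|ℱ k]) ∧ (∫ z, G (k+1) z ∂μ ≤ c * ∫ z, G k z ∂μ) := by
    intro k hk
    set g : Δ → Δ := f^[n - (k + 1)] with hgdef
    have hcomp : f^[n - k] = f ∘ g := by
      have h1 : n - k = (n - (k + 1)) + 1 := by omega
      rw [hgdef, h1, Function.iterate_succ']
    have hFk : (ℱ k : MeasurableSpace Δ) = (mΔ.comap f).comap g := by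
      show mΔ.comap f^[n - k] = _
      rw [hcomp, MeasurableSpace.comap_comp]
    have hzero : μ[(fun z => m₁ (g z)) | ℱ k] =ᵐ[μ] 0 := by
      rw [hFk]
      refine (condexp_comp_of_measurePreserving hf.measurable (hit (n - (k+1))) hsm hbd).trans ?_
      have h2 := (hit (n - (k+1))).quasiMeasurePreserving.ae_eq_comp hker
      simpa [Function.comp] using h2
    have hint_mg : Integrable (fun z => m₁ (g z)) μ :=
      integrable_of_bdd ((hsm.comp_measurable (hit _).measurable).aestronglyMeasurable)
        (fun z => hbd _)
    set H : Δ → ℝ := fun z => Real.exp (lam * m₁ (g z)) with hHdef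
    have hHpos : ∀ z, 0 < H z := fun z => Real.exp_pos _
    have hHbd : ∀ z, |H z| ≤ Real.exp (lam * R) := by
      intro z
      rw [abs_of_pos (hHpos z)]
      exact Real.exp_le_exp.mpr (mul_le_mul_of_nonneg_left ((abs_le.mp (hbd _)).2) hlam.le)
    have hHsm : StronglyMeasurable H :=
      Real.continuous_exp.comp_stronglyMeasurable
        ((hsm.comp_measurable (hit _).measurable).const_mul lam)
    have hHint : Integrable H μ := integrable_of_bdd hHsm.aestronglyMeasurable hHbd
    have hsplit : G (k + 1) = fun z => G k z * H z := by
      funext z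
      have hTsucc : T (k+1) z = m₁ (g z) + T k z := by
        show (∑ j ∈ Finset.Ico (n - (k+1)) n, m₁ (f^[j] z)) = _
        rw [Finset.sum_eq_sum_Ico_succ_bot (by omega : n - (k+1) < n)]
        have h1 : n - (k+1) + 1 = n - k := by omega
        rw [h1]
      show Real.exp (lam * T (k+1) z) = Real.exp (lam * T k z) * H z
      rw [hTsucc, mul_add, Real.exp_add, mul_comm]
    have hlin : ∀ b : ℝ, μ[(fun z => b + lam * m₁ (g z)) | ℱ k] =ᵐ[μ] fun _ => b := by
      intro b
      have h1 : (fun z => b + lam * m₁ (g z)) = (fun _ : Δ => b) + lam • (fun z => m₁ (g z)) := by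
        funext z; simp
      rw [h1]
      calc μ[(fun _ : Δ => b) + lam • (fun z => m₁ (g z))|ℱ k]
          =ᵐ[μ] μ[(fun _ : Δ => b)|ℱ k] + μ[lam • (fun z => m₁ (g z))|ℱ k] :=
            condExp_add (integrable_const b) (hint_mg.smul lam) _
        _ =ᵐ[μ] (fun _ : Δ => b) + lam • μ[(fun z => m₁ (g z))|ℱ k] := by
            refine Filter.EventuallyEq.add ?_ (condExp_smul lam _ _)
            rw [condExp_const (ℱ.le k)]
        _ =ᵐ[μ] fun _ => b := by
            filter_upwards [hzero] with z hz
            simp [hz]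
    have h1int : Integrable (fun z => 1 + lam * m₁ (g z)) μ :=
      (integrable_const (1:ℝ)).add (hint_mg.const_mul lam)
    have hcint : Integrable (fun z => c + lam * m₁ (g z)) μ :=
      (integrable_const c).add (hint_mg.const_mul lam)
    have hH_ge : (fun _ : Δ => (1:ℝ)) ≤ᵐ[μ] μ[H|ℱ k] := by
      refine (hlin 1).symm.le.trans (condExp_mono h1int hHint ?_)
      apply Filter.Eventually.of_forall
      intro z
      have := Real.add_one_le_exp (lam * m₁ (g z))
      simp only [hHdef]
      linarith
    have hH_le : μ[H|ℱ k] ≤ᵐ[μ] fun _ => c := by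
      refine (condExp_mono hHint hcint ?_).trans (hlin c).le
      apply Filter.Eventually.of_forall
      intro z
      have hu : |lam * m₁ (g z)| ≤ 1 := by
        rw [abs_mul, abs_of_pos hlam]
        calc lam * |m₁ (g z)| ≤ lam * R := mul_le_mul_of_nonneg_left (hbd _) hlam.le
          _ ≤ 1 := hlamR
      have h2 := exp_le_one_add_add_sq hu
      have hsq : (lam * m₁ (g z)) ^ 2 ≤ lam ^ 2 * R ^ 2 := by
        rw [mul_pow]
        apply mul_le_mul_of_nonneg_left _ (sq_nonneg lam)
        have := hbd (g z)
        nlinarith [abs_nonneg (m₁ (g z)), sq_abs (m₁ (g z))]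
      show H z ≤ c + lam * m₁ (g z)
      rw [hHdef, hcdef]
      calc Real.exp (lam * m₁ (g z)) ≤ 1 + lam * m₁ (g z) + (lam * m₁ (g z)) ^ 2 := h2
        _ ≤ 1 + lam ^ 2 * R ^ 2 + lam * m₁ (g z) := by linarith
    have hGH_int : Integrable (fun z => G k z * H z) μ := by
      apply integrable_of_bdd (C := Real.exp (lam * (n * R)) * Real.exp (lam * R))
      · exact (((hGsm k).mono (ℱ.le k)).mul hHsm).aestronglyMeasurable
      · intro z
        rw [abs_mul]
        exact mul_le_mul (hGbd k z) (hHbd z) (abs_nonneg _) (Real.exp_pos _).le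
    have hmul : μ[G (k + 1)|ℱ k] =ᵐ[μ] fun z => G k z * (μ[H|ℱ k]) z := by
      rw [hsplit]
      exact condExp_mul_of_stronglyMeasurable_left (hGsm k) hGH_int hHint
    constructor
    · filter_upwards [hmul, hH_ge] with z h1 h2
      rw [h1]
      have h3 : G k z * 1 ≤ G k z * (μ[H|ℱ k]) z :=
        mul_le_mul_of_nonneg_left h2 (hGpos k z).le
      simpa using h3
    · have hle2 : μ[G (k + 1)|ℱ k] ≤ᵐ[μ] fun z => c * G k z := by
        filter_upwards [hmul, hH_le] with z h1 h2
        rw [h1]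
        calc G k z * (μ[H|ℱ k]) z ≤ G k z * c :=
              mul_le_mul_of_nonneg_left h2 (hGpos k z).le
          _ = c * G k z := mul_comm _ _
      calc ∫ z, G (k+1) z ∂μ = ∫ z, (μ[G (k + 1)|ℱ k]) z ∂μ :=
            (integral_condExp (ℱ.le k)).symm
        _ ≤ ∫ z, c * G k z ∂μ :=
            integral_mono_ae integrable_condExp ((hGint k).const_mul c) hle2
        _ = c * ∫ z, G k z ∂μ := integral_const_mul c _
  have hadp : StronglyAdapted ℱ G := fun k => hGsm k
  have hstepall : ∀ k, G k ≤ᵐ[μ] μ[G (k + 1)|ℱ k] := by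
    intro k
    rcases lt_or_ge k n with hk | hk
    · exact (hkey k hk).1
    · have hTeq : T (k+1) = T k := by
        funext z
        have h1 : n - (k+1) = n - k := by omega
        show (∑ j ∈ Finset.Ico (n - (k+1)) n, m₁ (f^[j] z)) = _
        rw [h1]
      have hGeq : G (k+1) = G k := by
        funext z
        show Real.exp (lam * T (k+1) z) = Real.exp (lam * T k z)
        rw [hTeq]
      rw [hGeq, condExp_of_stronglyMeasurable (ℱ.le k) (hGsm k) (hGint k)]
  have hsub : Submartingale G ℱ μ := submartingale_nat hadp hGint hstepall
  have hG0 : ∫ z, G 0 z ∂μ = 1 := by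
    have hG0' : G 0 = fun _ => 1 := by
      funext z
      show Real.exp (lam * T 0 z) = 1
      have : T 0 z = 0 := by
        show (∑ j ∈ Finset.Ico (n - 0) n, m₁ (f^[j] z)) = 0
        simp
      rw [this, mul_zero, Real.exp_zero]
    rw [hG0']
    simp
  have hEG : ∀ k, k ≤ n → ∫ z, G k z ∂μ ≤ c ^ k := by
    intro k
    induction k with
    | zero => intro _; simp [hG0]
    | succ k ih =>
        intro hk1
        have hk : k < n := by omega
        calc ∫ z, G (k+1) z ∂μ ≤ c * ∫ z, G k z ∂μ := (hkey k hk).2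
          _ ≤ c * c ^ k := by
              apply mul_le_mul_of_nonneg_left (ih (by omega)) (by linarith)
          _ = c ^ (k+1) := by ring
  have hEGn : ∫ z, G n z ∂μ ≤ Real.exp (n * (lam ^ 2 * R ^ 2)) := by
    calc ∫ z, G n z ∂μ ≤ c ^ n := hEG n le_rfl
      _ ≤ Real.exp (lam ^ 2 * R ^ 2) ^ n := by
          apply pow_le_pow_left₀ (by linarith)
          linarith [Real.add_one_le_exp (lam ^ 2 * R ^ 2)]
      _ = Real.exp (n * (lam ^ 2 * R ^ 2)) := by
          rw [← Real.exp_nat_mul]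
  set ε : NNReal := ⟨Real.exp (lam * y), (Real.exp_pos _).le⟩ with hεdef
  have hεne : (ε : ENNReal) ≠ 0 := by
    simp only [ne_eq, ENNReal.coe_eq_zero]
    intro hh
    have := Real.exp_pos (lam * y)
    rw [NNReal.eq_iff] at hh
    simp only [hεdef, NNReal.coe_mk, NNReal.coe_zero] at hh
    exact this.ne' hh
  have hnonneg : 0 ≤ G := by
    intro k z
    exact (hGpos k z).le
  have hdoob := maximal_ineq hsub hnonneg (ε := ε) n
  have hsetle : μ {z | y ≤ (Finset.range (n + 1)).sup' Finset.nonempty_range_add_one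
        (fun k => T k z)} ≤
      μ {ω | (ε:ℝ) ≤ (Finset.range (n + 1)).sup' Finset.nonempty_range_add_one
        (fun k => G k ω)} := by
    apply measure_mono
    intro z hz
    simp only [Set.mem_setOf_eq] at hz ⊢
    obtain ⟨k, hkmem, hk⟩ := (Finset.le_sup'_iff _).mp hz
    refine (Finset.le_sup'_iff _).mpr ⟨k, hkmem, ?_⟩
    show (ε:ℝ) ≤ G k z
    have h1 : lam * y ≤ lam * T k z := mul_le_mul_of_nonneg_left hk hlam.le
    exact Real.exp_le_exp.mpr h1
  have hint_upper : ∫ ω in {ω | (ε:ℝ) ≤ (Finset.range (n + 1)).sup' Finset.nonempty_range_add_one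
        (fun k => G k ω)}, G n ω ∂μ ≤ ∫ ω, G n ω ∂μ :=
    setIntegral_le_integral (hGint n) (Filter.Eventually.of_forall fun z => (hGpos n z).le)
  have hS : μ {ω | (ε:ℝ) ≤ (Finset.range (n + 1)).sup' Finset.nonempty_range_add_one
        (fun k => G k ω)} ≤ ENNReal.ofReal (Real.exp (n * (lam ^ 2 * R ^ 2))) / ε := by
    rw [ENNReal.le_div_iff_mul_le (Or.inl hεne) (Or.inl ENNReal.coe_ne_top)]
    calc μ _ * ε = ε • μ _ := by rw [ENNReal.smul_def, smul_eq_mul, mul_comm]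
      _ ≤ ENNReal.ofReal (∫ ω in _, G n ω ∂μ) := hdoob
      _ ≤ ENNReal.ofReal (Real.exp (n * (lam ^ 2 * R ^ 2))) :=
          ENNReal.ofReal_le_ofReal (le_trans hint_upper hEGn)
  have hεcoe : (ε : ENNReal) = ENNReal.ofReal (Real.exp (lam * y)) := by
    rw [ENNReal.ofReal_eq_coe_nnreal (Real.exp_pos _).le]
    rfl
  have harith : Real.exp (n * (lam ^ 2 * R ^ 2)) / Real.exp (lam * y) =
      Real.exp (-(y ^ 2) / (4 * n * R ^ 2)) := by
    rw [← Real.exp_sub]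
    congr 1
    rw [hlamdef]
    field_simp
    ring
  calc μ {z | y ≤ (Finset.range (n + 1)).sup' Finset.nonempty_range_add_one
        (fun k => T k z)} ≤ _ := hsetle
    _ ≤ ENNReal.ofReal (Real.exp (n * (lam ^ 2 * R ^ 2))) / ε := hS
    _ = ENNReal.ofReal (Real.exp (-(y ^ 2) / (4 * n * R ^ 2))) := by
        rw [hεcoe, ← ENNReal.ofReal_div_of_pos (Real.exp_pos _), harith]


end AuxiliaryLemmas

/-- Let `f` be a measure-preserving map of a probability space `(Δ, 𝒜, μ)`,
let `m, χ ∈ L^∞(μ; ℝ)` with `E[m | f⁻¹𝒜] = 0` a.e., and set `Φ = m + χ∘f − χ`.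
Then there are `a, C > 0` such that for all `x > 0` and `n ≥ 1`,
`μ(max_{1≤k≤n} |Σ_{j<k} Φ∘f^j| ≥ x) ≤ C·exp(−a x²/n)`. -/
theorem exponential_concentration_of_bounded_martingale_coboundary
    {Δ : Type*} [mΔ : MeasurableSpace Δ] (μ : Measure Δ) [IsProbabilityMeasure μ]
    (f : Δ → Δ) (hf : MeasurePreserving f μ μ)
    (m χ : Δ → ℝ) (hm : MemLp m ⊤ μ) (hχ : MemLp χ ⊤ μ)
    (hker : μ[m | mΔ.comap f] =ᵐ[μ] 0) :
    ∃ a > (0 : ℝ), ∃ C > (0 : ℝ), ∀ x : ℝ, 0 < x → ∀ (n : ℕ) (hn : 1 ≤ n),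
      (μ {y | x ≤ (Finset.Icc 1 n).sup' (Finset.nonempty_Icc.mpr hn)
            (fun k => |∑ j ∈ Finset.range k,
              (m (f^[j] y) + χ (f (f^[j] y)) - χ (f^[j] y))|)}).toReal
        ≤ C * Real.exp (-a * x ^ 2 / n) := by
  classical
  obtain ⟨m₀, hm₀sm, hm₀ae⟩ := hm.aestronglyMeasurable
  obtain ⟨χ₀, hχ₀sm, hχ₀ae⟩ := hχ.aestronglyMeasurable
  set Rm : ℝ := (eLpNorm m ⊤ μ).toReal with hRmdef
  set Kχ : ℝ := (eLpNorm χ ⊤ μ).toReal with hKdef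
  have hRm0 : 0 ≤ Rm := ENNReal.toReal_nonneg
  have hK0 : 0 ≤ Kχ := ENNReal.toReal_nonneg
  have hmfin : eLpNormEssSup m μ ≠ ⊤ := by
    have h1 := hm.2
    rw [eLpNorm_exponent_top] at h1
    exact h1.ne
  have hχfin : eLpNormEssSup χ μ ≠ ⊤ := by
    have h1 := hχ.2
    rw [eLpNorm_exponent_top] at h1
    exact h1.ne
  have hmae : ∀ᵐ z ∂μ, |m z| ≤ Rm := by
    have hh : ∀ᵐ z ∂μ, (‖m z‖₊ : ℝ≥0∞) ≤ eLpNormEssSup m μ := ae_le_eLpNormEssSup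
    filter_upwards [hh] with z hz
    have h2 : ((‖m z‖₊ : ℝ≥0∞)).toReal ≤ (eLpNormEssSup m μ).toReal :=
      ENNReal.toReal_mono hmfin hz
    rw [hRmdef, eLpNorm_exponent_top]
    simpa [Real.norm_eq_abs] using h2
  have hχae : ∀ᵐ z ∂μ, |χ z| ≤ Kχ := by
    have hh : ∀ᵐ z ∂μ, (‖χ z‖₊ : ℝ≥0∞) ≤ eLpNormEssSup χ μ := ae_le_eLpNormEssSup
    filter_upwards [hh] with z hz
    have h2 : ((‖χ z‖₊ : ℝ≥0∞)).toReal ≤ (eLpNormEssSup χ μ).toReal :=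
      ENNReal.toReal_mono hχfin hz
    rw [hKdef, eLpNorm_exponent_top]
    simpa [Real.norm_eq_abs] using h2
  set m₁ : Δ → ℝ := fun z => max (-Rm) (min Rm (m₀ z)) with hm₁def
  set χ₁ : Δ → ℝ := fun z => max (-Kχ) (min Kχ (χ₀ z)) with hχ₁def
  have hm₁sm : StronglyMeasurable m₁ :=
    (measurable_const.max (measurable_const.min hm₀sm.measurable)).stronglyMeasurable
  have hχ₁sm : StronglyMeasurable χ₁ :=
    (measurable_const.max (measurable_const.min hχ₀sm.measurable)).stronglyMeasurable
  have hm₁ae : m₁ =ᵐ[μ] m := by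
    filter_upwards [hm₀ae, hmae] with z h1 h2
    obtain ⟨hl, hr⟩ := abs_le.mp h2
    rw [hm₁def]
    simp only
    rw [← h1, min_eq_right hr, max_eq_right hl]
  have hχ₁ae : χ₁ =ᵐ[μ] χ := by
    filter_upwards [hχ₀ae, hχae] with z h1 h2
    obtain ⟨hl, hr⟩ := abs_le.mp h2
    rw [hχ₁def]
    simp only
    rw [← h1, min_eq_right hr, max_eq_right hl]
  have hm₁bd : ∀ z, |m₁ z| ≤ Rm := fun z =>
    abs_le.mpr ⟨le_max_left _ _, max_le (by linarith) (min_le_left _ _)⟩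
  have hχ₁bd : ∀ z, |χ₁ z| ≤ Kχ := fun z =>
    abs_le.mpr ⟨le_max_left _ _, max_le (by linarith) (min_le_left _ _)⟩
  set R : ℝ := Rm + 1 with hRdef
  have hRpos : 0 < R := by linarith
  have hm₁R : ∀ z, |m₁ z| ≤ R := fun z => (hm₁bd z).trans (by linarith)
  have hker₁ : μ[m₁ | mΔ.comap f] =ᵐ[μ] 0 := (condExp_congr_ae hm₁ae).trans hker
  have hker₂ : μ[(fun z => -(m₁ z)) | mΔ.comap f] =ᵐ[μ] 0 := by
    have h1 : (fun z => -(m₁ z)) = -m₁ := rfl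
    rw [h1]
    refine (condExp_neg m₁ _).trans ?_
    filter_upwards [hker₁] with z hz
    simp only [Pi.neg_apply, hz, Pi.zero_apply, neg_zero]
  set a : ℝ := (64 * R ^ 2)⁻¹ with hadef
  have ha0 : 0 < a := by positivity
  set C : ℝ := 2 + Real.exp (16 * a * Kχ ^ 2) with hCdef
  have hC0 : 0 < C := by positivity
  refine ⟨a, ha0, C, hC0, ?_⟩
  intro x hx n hn
  have hn0 : (1:ℝ) ≤ (n:ℝ) := by exact_mod_cast hn
  by_cases hxK : x < 4 * Kχ
  · -- trivial bound regime
    have h1 : (μ {y | x ≤ (Finset.Icc 1 n).sup' (Finset.nonempty_Icc.mpr hn)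
        (fun k => |∑ j ∈ Finset.range k,
          (m (f^[j] y) + χ (f (f^[j] y)) - χ (f^[j] y))|)}).toReal ≤ 1 := by
      calc (μ _).toReal ≤ (1 : ℝ≥0∞).toReal :=
            ENNReal.toReal_mono ENNReal.one_ne_top prob_le_one
        _ = 1 := by simp
    have hxx : x ^ 2 / n ≤ 16 * Kχ ^ 2 := by
      have h3 : x ^ 2 ≤ 16 * Kχ ^ 2 := by nlinarith
      calc x ^ 2 / n ≤ x ^ 2 := div_le_self (sq_nonneg x) hn0
        _ ≤ _ := h3
    have h4 : Real.exp (-(16 * a * Kχ ^ 2)) ≤ Real.exp (-a * x ^ 2 / n) := by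
      apply Real.exp_le_exp.mpr
      have h5 : -a * x ^ 2 / n = -(a * (x ^ 2 / n)) := by ring
      rw [h5]
      have h6 := mul_le_mul_of_nonneg_left hxx ha0.le
      linarith
    have h5 : 1 ≤ C * Real.exp (-a * x ^ 2 / n) := by
      have h6 : Real.exp (16 * a * Kχ ^ 2) * Real.exp (-(16 * a * Kχ ^ 2)) = 1 := by
        rw [← Real.exp_add]; simp
      calc (1:ℝ) = Real.exp (16 * a * Kχ ^ 2) * Real.exp (-(16 * a * Kχ ^ 2)) := h6.symm
        _ ≤ C * Real.exp (-a * x ^ 2 / n) := by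
            apply mul_le_mul _ h4 (Real.exp_pos _).le hC0.le
            rw [hCdef]; linarith
    linarith
  · push_neg at hxK
    set Y : ℝ := (x - 2 * Kχ) / 2 with hYdef
    have hY0 : 0 < Y := by rw [hYdef]; linarith
    have hYx : x / 4 ≤ Y := by rw [hYdef]; linarith
    have hcore1 : μ {z | Y ≤ (Finset.range (n + 1)).sup' Finset.nonempty_range_add_one
        (fun k => ∑ j ∈ Finset.Ico (n - k) n, m₁ (f^[j] z))} ≤
        ENNReal.ofReal (Real.exp (-(Y ^ 2) / (4 * n * R ^ 2))) :=
      core_maximal f hf m₁ hm₁sm hRpos hm₁R hker₁ hn hY0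
    have hcore2 : μ {z | Y ≤ (Finset.range (n + 1)).sup' Finset.nonempty_range_add_one
        (fun k => ∑ j ∈ Finset.Ico (n - k) n, -(m₁ (f^[j] z)))} ≤
        ENNReal.ofReal (Real.exp (-(Y ^ 2) / (4 * n * R ^ 2))) :=
      core_maximal f hf (fun z => -(m₁ z)) hm₁sm.neg hRpos
        (fun z => by rw [abs_neg]; exact hm₁R z) hker₂ hn hY0
    set N : Set Δ := {z | ¬ (m₁ z = m z)} ∪ {z | ¬ (χ₁ z = χ z)} with hNdef
    have hN : μ N = 0 :=
      measure_union_null (ae_iff.mp hm₁ae) (ae_iff.mp hχ₁ae)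
    set bad : Set Δ := ⋃ j : ℕ, f^[j] ⁻¹' N with hbaddef
    have hbad : μ bad = 0 :=
      measure_iUnion_null fun j => (hf.iterate j).quasiMeasurePreserving.preimage_null hN
    have hincl : {y | x ≤ (Finset.Icc 1 n).sup' (Finset.nonempty_Icc.mpr hn)
          (fun k => |∑ j ∈ Finset.range k,
            (m (f^[j] y) + χ (f (f^[j] y)) - χ (f^[j] y))|)} ⊆
        bad ∪ ({z | Y ≤ (Finset.range (n + 1)).sup' Finset.nonempty_range_add_one
            (fun k => ∑ j ∈ Finset.Ico (n - k) n, m₁ (f^[j] z))} ∪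
          {z | Y ≤ (Finset.range (n + 1)).sup' Finset.nonempty_range_add_one
            (fun k => ∑ j ∈ Finset.Ico (n - k) n, -(m₁ (f^[j] z)))}) := by
      intro z hz
      by_cases hzb : z ∈ bad
      · exact Or.inl hzb
      refine Or.inr ?_
      have hgood : ∀ j : ℕ, m₁ (f^[j] z) = m (f^[j] z) ∧ χ₁ (f^[j] z) = χ (f^[j] z) := by
        intro j
        have hnm : f^[j] z ∉ N := fun hmem => hzb (Set.mem_iUnion.mpr ⟨j, hmem⟩)
        rw [hNdef] at hnm
        simp only [Set.mem_union, Set.mem_setOf_eq, not_or, not_not] at hnm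
        exact hnm
      simp only [Set.mem_setOf_eq] at hz
      obtain ⟨k, hkmem, hk⟩ := (Finset.le_sup'_iff _).mp hz
      obtain ⟨hk1, hk2⟩ := Finset.mem_Icc.mp hkmem
      have hchain : ∀ j : ℕ, χ (f (f^[j] z)) = χ₁ (f^[j+1] z) := by
        intro j
        rw [← Function.iterate_succ_apply' f j z]
        exact ((hgood (j+1)).2).symm
      have hsum : (∑ j ∈ Finset.range k, (m (f^[j] z) + χ (f (f^[j] z)) - χ (f^[j] z)))
          = (∑ j ∈ Finset.range k, m₁ (f^[j] z)) + (χ₁ (f^[k] z) - χ₁ z) := by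
        have h1 : ∀ j ∈ Finset.range k, (m (f^[j] z) + χ (f (f^[j] z)) - χ (f^[j] z))
            = m₁ (f^[j] z) + (χ₁ (f^[j+1] z) - χ₁ (f^[j] z)) := by
          intro j _
          rw [← (hgood j).1, ← (hgood j).2, hchain j]
          ring
        rw [Finset.sum_congr rfl h1, Finset.sum_add_distrib,
          Finset.sum_range_sub (fun j => χ₁ (f^[j] z))]
        simp
      rw [hsum] at hk
      have habs : 2 * Y ≤ |∑ j ∈ Finset.range k, m₁ (f^[j] z)| := by
        have h2 := abs_add_le (∑ j ∈ Finset.range k, m₁ (f^[j] z)) (χ₁ (f^[k] z) - χ₁ z)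
        have h3 : |χ₁ (f^[k] z) - χ₁ z| ≤ 2 * Kχ := by
          have h3a : |χ₁ (f^[k] z) - χ₁ z| ≤ |χ₁ (f^[k] z)| + |χ₁ z| := by
            rw [sub_eq_add_neg]
            exact (abs_add_le _ _).trans (by rw [abs_neg])
          linarith [hχ₁bd (f^[k] z), hχ₁bd z]
        have h4 : x ≤ |∑ j ∈ Finset.range k, m₁ (f^[j] z)| + |χ₁ (f^[k] z) - χ₁ z| :=
          le_trans hk h2
        rw [hYdef]
        linarith
      have hsplit : (∑ j ∈ Finset.range k, m₁ (f^[j] z))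
          = (∑ j ∈ Finset.Ico (n - n) n, m₁ (f^[j] z))
            - (∑ j ∈ Finset.Ico (n - (n - k)) n, m₁ (f^[j] z)) := by
        have h5 : n - n = 0 := Nat.sub_self n
        have h6 : n - (n - k) = k := by omega
        rw [h5, h6, Finset.range_eq_Ico]
        have h7 := Finset.sum_Ico_consecutive (fun j => m₁ (f^[j] z)) (Nat.zero_le k) hk2
        linarith [h7]
      have hor : Y ≤ |∑ j ∈ Finset.Ico (n - n) n, m₁ (f^[j] z)| ∨
          Y ≤ |∑ j ∈ Finset.Ico (n - (n - k)) n, m₁ (f^[j] z)| := by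
        by_contra hcon
        push_neg at hcon
        rw [hsplit] at habs
        have h8 : |(∑ j ∈ Finset.Ico (n - n) n, m₁ (f^[j] z))
            - (∑ j ∈ Finset.Ico (n - (n - k)) n, m₁ (f^[j] z))| ≤
            |∑ j ∈ Finset.Ico (n - n) n, m₁ (f^[j] z)| +
            |∑ j ∈ Finset.Ico (n - (n - k)) n, m₁ (f^[j] z)| := by
          rw [sub_eq_add_neg]
          exact (abs_add_le _ _).trans (by rw [abs_neg])
        linarith [hcon.1, hcon.2]
      have hmemn : n ∈ Finset.range (n + 1) := Finset.self_mem_range_succ n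
      have hmemnk : n - k ∈ Finset.range (n + 1) := Finset.mem_range.mpr (by omega)
      rcases hor with h | h
      · rcases le_abs.mp h with h' | h'
        · exact Or.inl (Set.mem_setOf.mpr ((Finset.le_sup'_iff _).mpr ⟨n, hmemn, h'⟩))
        · refine Or.inr (Set.mem_setOf.mpr ((Finset.le_sup'_iff _).mpr ⟨n, hmemn, ?_⟩))
          rw [Finset.sum_neg_distrib]
          exact h'
      · rcases le_abs.mp h with h' | h'
        · exact Or.inl (Set.mem_setOf.mpr ((Finset.le_sup'_iff _).mpr ⟨n - k, hmemnk, h'⟩))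
        · refine Or.inr (Set.mem_setOf.mpr ((Finset.le_sup'_iff _).mpr ⟨n - k, hmemnk, ?_⟩))
          rw [Finset.sum_neg_distrib]
          exact h'
    set e0 : ℝ := Real.exp (-(Y ^ 2) / (4 * n * R ^ 2)) with he0
    have hμle : μ {y | x ≤ (Finset.Icc 1 n).sup' (Finset.nonempty_Icc.mpr hn)
          (fun k => |∑ j ∈ Finset.range k,
            (m (f^[j] y) + χ (f (f^[j] y)) - χ (f^[j] y))|)} ≤
        ENNReal.ofReal e0 + ENNReal.ofReal e0 := by
      calc μ _ ≤ μ (bad ∪ _) := measure_mono hincl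
        _ ≤ μ bad + μ _ := measure_union_le _ _
        _ ≤ 0 + (ENNReal.ofReal e0 + ENNReal.ofReal e0) := by
            rw [hbad]
            exact add_le_add le_rfl ((measure_union_le _ _).trans (add_le_add hcore1 hcore2))
        _ = _ := by rw [zero_add]
    have htoReal : (μ {y | x ≤ (Finset.Icc 1 n).sup' (Finset.nonempty_Icc.mpr hn)
          (fun k => |∑ j ∈ Finset.range k,
            (m (f^[j] y) + χ (f (f^[j] y)) - χ (f^[j] y))|)}).toReal ≤ 2 * e0 := by
      have h8 := ENNReal.toReal_mono
        (ENNReal.add_ne_top.mpr ⟨ENNReal.ofReal_ne_top, ENNReal.ofReal_ne_top⟩) hμle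
      rwa [ENNReal.toReal_add ENNReal.ofReal_ne_top ENNReal.ofReal_ne_top,
        ENNReal.toReal_ofReal (Real.exp_pos _).le, ← two_mul] at h8
    have hcomp : e0 ≤ Real.exp (-a * x ^ 2 / n) := by
      apply Real.exp_le_exp.mpr
      have hyx2 : x ^ 2 / 16 ≤ Y ^ 2 := by nlinarith
      have hnpos : (0:ℝ) < n := by linarith
      have h9 : -a * x ^ 2 / n = -(a * x ^ 2 / n) := by ring
      have h10 : -(Y ^ 2) / (4 * n * R ^ 2) = -(Y ^ 2 / (4 * n * R ^ 2)) := by ring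
      rw [h9, h10, neg_le_neg_iff]
      rw [hadef, div_le_div_iff₀ (by positivity) (by positivity)]
      have h11 : (64 * R ^ 2)⁻¹ * x ^ 2 * (4 * (n:ℝ) * R ^ 2) = x ^ 2 * n / 16 := by
        field_simp
        ring
      rw [h11]
      nlinarith [mul_le_mul_of_nonneg_right hyx2 hnpos.le]
    calc (μ _).toReal ≤ 2 * e0 := htoReal
      _ ≤ 2 * Real.exp (-a * x ^ 2 / n) := by linarith
      _ ≤ C * Real.exp (-a * x ^ 2 / n) := by
          apply mul_le_mul_of_nonneg_right _ (Real.exp_pos _).le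
          rw [hCdef]
          linarith [Real.exp_pos (16 * a * Kχ ^ 2)]
end

section
/- Let (X, μ_X) and (Δ, μ_Δ) be probability spaces, T : X → X and f : Δ → Δ measurable measure-preserving maps, and π : Δ → X a measurable measure-preserving map with T∘π = π∘f. Let p ∈ (2, ∞), let v : X → ℝ^N be bounded measurable, and let m, χ : Δ → ℝ^N be measurable with v∘π = m + χ∘f − χ μ_Δ-almost everywhere. Assume there is C₀ > 0 such that ‖max_{1≤k≤n} |χ∘f^k − χ|‖_{L^p(μ_Δ)} ≤ C₀ n^{1/p} for all n ≥ 1. Define B_n : X → C([0,1], ℝ^N) by B_n(x)(k/n) = n^{−1/2} Σ_{j=0}^{k−1} v(T^j x) for 0 ≤ k ≤ n with linear interpolation in between, and X_n : Δ → C([0,1], ℝ^N) by X_n(y)(k/n) = n^{−1/2} Σ_{j=0}^{k−1} m(f^j y) for 0 ≤ k ≤ n with linear interpolation. Then there is C > 0 such that for all n ≥ 1 and every 1-Lipschitz function F : C([0,1], ℝ^N) → ℝ (with respect to the uniform metric), |∫_X F(B_n) dμ_X − ∫_Δ F(X_n) dμ_Δ| ≤ C n^{−(p−2)/(2p)}.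 In particular the 1-Wasserstein distance between the laws of B_n and X_n is at most C n^{−(p−2)/(2p)}. -/
open MeasureTheory
open scoped ENNReal NNReal

/-- The piecewise-linear path `t ↦ n^{-1/2}(Σ_{j<⌊nt⌋} v(T^j x) + (nt − ⌊nt⌋)·v(T^{⌊nt⌋} x))`,
which at `t = k/n` equals `n^{-1/2} Σ_{j<k} v(T^j x)` and is linear in between. -/
noncomputable def birkhoffPath {α E : Type*} [NormedAddCommGroup E] [NormedSpace ℝ E]
    (T : α → α) (v : α → E) (n : ℕ) (x : α) : ℝ → E :=
  fun t => ((n : ℝ) ^ (-(1 / 2 : ℝ))) •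
    ((∑ j ∈ Finset.range ⌊(n : ℝ) * t⌋₊, v (T^[j] x)) +
      ((n : ℝ) * t - ⌊(n : ℝ) * t⌋₊) • v (T^[⌊(n : ℝ) * t⌋₊] x))

/-- The uniform (extended) distance between two paths over the time interval `[0,1]`. -/
noncomputable def supEDist01 {E : Type*} [PseudoEMetricSpace E] (g h : ℝ → E) : ℝ≥0∞ :=
  ⨆ t : Set.Icc (0 : ℝ) 1, edist (g t) (h t)

set_option linter.unusedSectionVars false

section helpers
variable {E : Type*} [NormedAddCommGroup E] [NormedSpace ℝ E]

lemma F_eq_of_eqOn (F : (ℝ → E) → ℝ)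
    (hF : ∀ g h, ENNReal.ofReal |F g - F h| ≤ supEDist01 g h)
    {g h : ℝ → E} (hgh : ∀ t ∈ Set.Icc (0:ℝ) 1, g t = h t) : F g = F h := by
  have h1 : supEDist01 g h = 0 := by
    unfold supEDist01
    simp only [ENNReal.iSup_eq_zero]
    intro t
    rw [hgh t t.2]
    simp
  have h2 := (hF g h).trans h1.le
  rw [nonpos_iff_eq_zero, ENNReal.ofReal_eq_zero] at h2
  have := abs_nonneg (F g - F h)
  have : |F g - F h| = 0 := le_antisymm h2 this
  have := abs_eq_zero.mp this
  linarith

lemma F_dist_le (F : (ℝ → E) → ℝ)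
    (hF : ∀ g h, ENNReal.ofReal |F g - F h| ≤ supEDist01 g h)
    {g h : ℝ → E} {R : ℝ}
    (hgh : ∀ t ∈ Set.Icc (0:ℝ) 1, ‖g t - h t‖ ≤ R) : |F g - F h| ≤ R := by
  have hR : 0 ≤ R := le_trans (norm_nonneg _) (hgh 0 ⟨le_refl 0, zero_le_one⟩)
  have h1 : supEDist01 g h ≤ ENNReal.ofReal R := by
    refine iSup_le fun t => ?_
    rw [edist_dist, dist_eq_norm]
    exact ENNReal.ofReal_le_ofReal (hgh t t.2)
  have h2 := (hF g h).trans h1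
  rwa [ENNReal.ofReal_le_ofReal_iff hR] at h2

end helpers

section meas
variable {α E : Type*} [MeasurableSpace α]
  [NormedAddCommGroup E] [NormedSpace ℝ E] [MeasurableSpace E] [BorelSpace E]
  [SecondCountableTopology E]

lemma birkhoff_coeff_nonneg (n : ℕ) : (0:ℝ) ≤ (n : ℝ) ^ (-(1/2 : ℝ)) :=
  Real.rpow_nonneg (Nat.cast_nonneg n) _

lemma birkhoff_coeff_le_one (n : ℕ) : (n : ℝ) ^ (-(1/2 : ℝ)) ≤ 1 := by
  rcases Nat.eq_zero_or_pos n with h | h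
  · subst h
    rw [Nat.cast_zero, Real.zero_rpow (by norm_num)]
    norm_num
  · exact Real.rpow_le_one_of_one_le_of_nonpos (by exact_mod_cast h) (by norm_num)

lemma floor_le_of_mem_Icc (n : ℕ) {t : ℝ} (ht : t ∈ Set.Icc (0:ℝ) 1) :
    ⌊(n:ℝ) * t⌋₊ ≤ n := by
  have h1 : (n:ℝ) * t ≤ n := by nlinarith [ht.1, ht.2, Nat.cast_nonneg (α := ℝ) n]
  calc ⌊(n:ℝ) * t⌋₊ ≤ ⌊(n:ℝ)⌋₊ := Nat.floor_mono h1
    _ = n := Nat.floor_natCast n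

lemma theta_nonneg (n : ℕ) {t : ℝ} (ht : t ∈ Set.Icc (0:ℝ) 1) :
    0 ≤ (n:ℝ) * t - ⌊(n:ℝ) * t⌋₊ := by
  have h0 : (0:ℝ) ≤ (n:ℝ) * t := mul_nonneg (Nat.cast_nonneg n) ht.1
  have := Nat.floor_le h0
  linarith

lemma theta_le_one (n : ℕ) (t : ℝ) : (n:ℝ) * t - ⌊(n:ℝ) * t⌋₊ ≤ 1 := by
  have := Nat.lt_floor_add_one ((n:ℝ) * t)
  linarith

lemma measurable_F_birkhoff {T : α → α} (hT : Measurable T) {v : α → E}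
    (hv : Measurable v) (n : ℕ) (F : (ℝ → E) → ℝ)
    (hF : ∀ g h, ENNReal.ofReal |F g - F h| ≤ supEDist01 g h) :
    Measurable fun x => F (birkhoffPath T v n x) := by
  set c : ℝ := (n : ℝ) ^ (-(1/2 : ℝ)) with hcdef
  have hc0 : 0 ≤ c := birkhoff_coeff_nonneg n
  have hc1 : c ≤ 1 := birkhoff_coeff_le_one n
  set idx : ℕ → Fin (n+1) := fun j => ⟨min j n, Nat.lt_succ_of_le (min_le_right _ _)⟩
    with hidxdef
  have hidx : ∀ j : ℕ, j ≤ n → ((idx j : Fin (n+1)) : ℕ) = j := by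
    intro j hj; simp [hidxdef, min_eq_left hj]
  set P : (Fin (n+1) → E) → ℝ → E := fun w t =>
    c • ((∑ j ∈ Finset.range (min ⌊(n:ℝ)*t⌋₊ n), w (idx j)) +
      ((n:ℝ)*t - ⌊(n:ℝ)*t⌋₊) • w (idx ⌊(n:ℝ)*t⌋₊)) with hPdef
  set W : α → Fin (n+1) → E := fun x i => v (T^[(i:ℕ)] x) with hWdef
  have hWmeas : Measurable W :=
    measurable_pi_lambda _ fun i => hv.comp (hT.iterate (i:ℕ))
  have hPeq : ∀ x, F (birkhoffPath T v n x) = F (P (W x)) := by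
    intro x
    refine F_eq_of_eqOn F hF fun t ht => ?_
    have hk := floor_le_of_mem_Icc n ht
    simp only [birkhoffPath, hPdef, min_eq_left hk]
    congr 2
    · refine Finset.sum_congr rfl fun j hj => ?_
      rw [Finset.mem_range] at hj
      simp [hWdef, hidxdef, min_eq_left (le_trans hj.le hk)]
    · simp [hWdef, hidxdef, min_eq_left hk]
  have hLip : LipschitzWith (⟨(n:ℝ)+1, by positivity⟩ : ℝ≥0) (fun w => F (P w)) := by
    apply LipschitzWith.of_dist_le_mul
    intro w w'
    rw [Real.dist_eq]
    show |F (P w) - F (P w')| ≤ ((n:ℝ)+1) * dist w w'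
    refine F_dist_le F hF fun t ht => ?_
    set θ : ℝ := (n:ℝ)*t - ⌊(n:ℝ)*t⌋₊ with hθdef
    have hθ0 : 0 ≤ θ := theta_nonneg n ht
    have hθ1 : θ ≤ 1 := theta_le_one n t
    set K : ℕ := min ⌊(n:ℝ)*t⌋₊ n with hKdef
    have hKn : K ≤ n := min_le_right _ _
    have hPsub : P w t - P w' t =
        c • ((∑ j ∈ Finset.range K, (w (idx j) - w' (idx j))) +
          θ • (w (idx ⌊(n:ℝ)*t⌋₊) - w' (idx ⌊(n:ℝ)*t⌋₊))) := by
      simp only [hPdef, Finset.sum_sub_distrib, smul_sub]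
      module
    rw [hPsub]
    have hcoord : ∀ i : Fin (n+1), ‖w i - w' i‖ ≤ dist w w' := by
      intro i
      rw [← dist_eq_norm]
      exact dist_le_pi_dist w w' i
    have hd0 : 0 ≤ dist w w' := dist_nonneg
    calc ‖c • ((∑ j ∈ Finset.range K, (w (idx j) - w' (idx j))) +
          θ • (w (idx ⌊(n:ℝ)*t⌋₊) - w' (idx ⌊(n:ℝ)*t⌋₊)))‖
        = c * ‖(∑ j ∈ Finset.range K, (w (idx j) - w' (idx j))) +
          θ • (w (idx ⌊(n:ℝ)*t⌋₊) - w' (idx ⌊(n:ℝ)*t⌋₊))‖ := by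
          rw [norm_smul, Real.norm_eq_abs, abs_of_nonneg hc0]
      _ ≤ 1 * (‖∑ j ∈ Finset.range K, (w (idx j) - w' (idx j))‖ +
          ‖θ • (w (idx ⌊(n:ℝ)*t⌋₊) - w' (idx ⌊(n:ℝ)*t⌋₊))‖) := by
          apply mul_le_mul hc1 (norm_add_le _ _) (norm_nonneg _) zero_le_one
      _ ≤ (K : ℝ) * dist w w' + 1 * dist w w' := by
          rw [one_mul]
          gcongr ?_ + ?_
          · calc ‖∑ j ∈ Finset.range K, (w (idx j) - w' (idx j))‖
                ≤ ∑ j ∈ Finset.range K, ‖w (idx j) - w' (idx j)‖ := norm_sum_le _ _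
              _ ≤ ∑ _j ∈ Finset.range K, dist w w' :=
                  Finset.sum_le_sum fun j _ => hcoord _
              _ = (K : ℝ) * dist w w' := by
                  rw [Finset.sum_const, Finset.card_range, nsmul_eq_mul]
          · rw [norm_smul, Real.norm_eq_abs, abs_of_nonneg hθ0]
            exact mul_le_mul hθ1 (hcoord _) (norm_nonneg _) zero_le_one
      _ ≤ ((n:ℝ)+1) * dist w w' := by
          have : (K:ℝ) ≤ (n:ℝ) := by exact_mod_cast hKn
          nlinarith
  have : (fun x => F (birkhoffPath T v n x)) = (fun w => F (P w)) ∘ W := by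
    funext x; exact hPeq x
  rw [this]
  exact (hLip.continuous.measurable).comp hWmeas

lemma F_birkhoff_bound {T : α → α} {v : α → E} {Cv : ℝ}
    (hvb : ∀ x, ‖v x‖ ≤ Cv) (n : ℕ) (F : (ℝ → E) → ℝ)
    (hF : ∀ g h, ENNReal.ofReal |F g - F h| ≤ supEDist01 g h) (x : α) :
    |F (birkhoffPath T v n x)| ≤ |F (fun _ => 0)| + ((n:ℝ)+1) * max Cv 0 := by
  have key : |F (birkhoffPath T v n x) - F (fun _ => 0)| ≤ ((n:ℝ)+1) * max Cv 0 := by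
    refine F_dist_le F hF fun t ht => ?_
    have hk := floor_le_of_mem_Icc n ht
    have hθ0 := theta_nonneg n ht
    have hθ1 := theta_le_one n t
    have hC0 : ∀ y, ‖v y‖ ≤ max Cv 0 := fun y => le_trans (hvb y) (le_max_left _ _)
    have hmC0 : 0 ≤ max Cv 0 := le_max_right _ _
    simp only [birkhoffPath, sub_zero]
    calc ‖((n : ℝ) ^ (-(1 / 2 : ℝ))) •
        ((∑ j ∈ Finset.range ⌊(n : ℝ) * t⌋₊, v (T^[j] x)) +
          ((n : ℝ) * t - ⌊(n : ℝ) * t⌋₊) • v (T^[⌊(n : ℝ) * t⌋₊] x))‖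
        ≤ 1 * (‖∑ j ∈ Finset.range ⌊(n : ℝ) * t⌋₊, v (T^[j] x)‖ +
            ‖((n : ℝ) * t - ⌊(n : ℝ) * t⌋₊) • v (T^[⌊(n : ℝ) * t⌋₊] x)‖) := by
          rw [norm_smul, Real.norm_eq_abs, abs_of_nonneg (birkhoff_coeff_nonneg n)]
          exact mul_le_mul (birkhoff_coeff_le_one n) (norm_add_le _ _) (norm_nonneg _)
            zero_le_one
      _ ≤ (⌊(n : ℝ) * t⌋₊ : ℝ) * max Cv 0 + 1 * max Cv 0 := by
          rw [one_mul]
          gcongr ?_ + ?_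
          · calc ‖∑ j ∈ Finset.range ⌊(n : ℝ) * t⌋₊, v (T^[j] x)‖
                ≤ ∑ j ∈ Finset.range ⌊(n : ℝ) * t⌋₊, ‖v (T^[j] x)‖ := norm_sum_le _ _
              _ ≤ ∑ _j ∈ Finset.range ⌊(n : ℝ) * t⌋₊, max Cv 0 :=
                  Finset.sum_le_sum fun j _ => hC0 _
              _ = (⌊(n : ℝ) * t⌋₊ : ℝ) * max Cv 0 := by
                  rw [Finset.sum_const, Finset.card_range, nsmul_eq_mul]
          · rw [norm_smul, Real.norm_eq_abs, abs_of_nonneg hθ0]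
            exact mul_le_mul hθ1 (hC0 _) (norm_nonneg _) zero_le_one
      _ ≤ ((n:ℝ)+1) * max Cv 0 := by
          have : ((⌊(n : ℝ) * t⌋₊ : ℕ) : ℝ) ≤ (n:ℝ) := by exact_mod_cast hk
          nlinarith
  calc |F (birkhoffPath T v n x)|
      ≤ |F (birkhoffPath T v n x) - F (fun _ => 0)| + |F (fun _ => 0)| := by
        have := abs_sub_abs_le_abs_sub (F (birkhoffPath T v n x)) (F (fun _ => 0))
        have h2 := abs_add_le (F (birkhoffPath T v n x) - F (fun _ => 0)) (F (fun _ => 0))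
        simp only [sub_add_cancel] at h2
        exact h2
    _ ≤ |F (fun _ => 0)| + ((n:ℝ)+1) * max Cv 0 := by linarith [key]

end meas

/-- Martingale approximation of the interpolated Birkhoff-sum process:
if `v∘π = m + χ∘f − χ` with the coboundary maximum estimate
`‖max_{1≤k≤n}|χ∘f^k − χ|‖_p ≤ C₀ n^{1/p}`, then the interpolated processes `B_n` (driven by
`v, T` on `X`) and `X_n` (driven by `m, f` on `Δ`) satisfy
`|∫ F(B_n) − ∫ F(X_n)| ≤ C n^{−(p−2)/(2p)}` for all `1`-Lipschitz functionals `F` with respect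
to the uniform metric on `C([0,1], ℝ^N)`; in particular `𝒲(B_n, X_n) ≤ C n^{−(p−2)/(2p)}`. -/
theorem wasserstein_birkhoff_vs_martingale_map
    {X Δ : Type*} [MeasurableSpace X] [MeasurableSpace Δ]
    (μX : Measure X) [IsProbabilityMeasure μX] (μΔ : Measure Δ) [IsProbabilityMeasure μΔ]
    (T : X → X) (hT : MeasurePreserving T μX μX)
    (f : Δ → Δ) (hf : MeasurePreserving f μΔ μΔ)
    (π : Δ → X) (hπ : MeasurePreserving π μΔ μX) (hsemi : T ∘ π = π ∘ f)
    (p : ℝ) (hp : 2 < p)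
    {N : ℕ} (v : X → EuclideanSpace ℝ (Fin N)) (hv : Measurable v)
    (Cv : ℝ) (hvb : ∀ x, ‖v x‖ ≤ Cv)
    (m χ : Δ → EuclideanSpace ℝ (Fin N)) (hm : Measurable m) (hχ : Measurable χ)
    (hdec : ∀ᵐ y ∂μΔ, v (π y) = m y + χ (f y) - χ y)
    (C₀ : ℝ) (hC₀ : 0 < C₀)
    (hcob : ∀ (n : ℕ) (hn : 1 ≤ n),
      eLpNorm (fun y => (Finset.Icc 1 n).sup' (Finset.nonempty_Icc.mpr hn)
          fun k => ‖χ (f^[k] y) - χ y‖) (ENNReal.ofReal p) μΔ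
        ≤ ENNReal.ofReal (C₀ * (n : ℝ) ^ (1 / p))) :
    ∃ C > (0 : ℝ), ∀ n : ℕ, 1 ≤ n →
      ∀ F : (ℝ → EuclideanSpace ℝ (Fin N)) → ℝ,
        (∀ g h, ENNReal.ofReal |F g - F h| ≤ supEDist01 g h) →
        |(∫ x, F (birkhoffPath T v n x) ∂μX) - ∫ y, F (birkhoffPath f m n y) ∂μΔ|
          ≤ C * (n : ℝ) ^ (-((p - 2) / (2 * p))) := by
  refine ⟨C₀, hC₀, ?_⟩
  intro n hn F hF
  have hn0 : (0:ℝ) < n := by exact_mod_cast hn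
  set c : ℝ := (n:ℝ) ^ (-(1/2:ℝ)) with hcdef
  have hc0 : 0 ≤ c := birkhoff_coeff_nonneg n
  -- the maximal coboundary function
  set M : Δ → ℝ := fun y => (Finset.Icc 1 n).sup' (Finset.nonempty_Icc.mpr hn)
    fun k => ‖χ (f^[k] y) - χ y‖ with hMdef
  have hMmeas : Measurable M := by
    have hMeq : M = (Finset.Icc 1 n).sup' (Finset.nonempty_Icc.mpr hn)
        (fun k y => ‖χ (f^[k] y) - χ y‖) := by
      funext y; rw [Finset.sup'_apply]
    rw [hMeq]
    exact Finset.measurable_sup' _ fun k _ =>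
      ((hχ.comp (hf.measurable.iterate k)).sub hχ).norm
  have h1n : (1:ℕ) ∈ Finset.Icc 1 n := Finset.mem_Icc.mpr ⟨le_refl 1, hn⟩
  have hMle : ∀ y, ∀ k, 1 ≤ k → k ≤ n → ‖χ (f^[k] y) - χ y‖ ≤ M y := fun y k h1 h2 =>
    Finset.le_sup' (fun k => ‖χ (f^[k] y) - χ y‖) (Finset.mem_Icc.mpr ⟨h1, h2⟩)
  have hM0 : ∀ y, 0 ≤ M y := fun y =>
    le_trans (norm_nonneg _) (hMle y 1 le_rfl hn)
  have hp1 : (1:ℝ≥0∞) ≤ ENNReal.ofReal p := ENNReal.one_le_ofReal.mpr (by linarith)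
  have hMp : MemLp M (ENNReal.ofReal p) μΔ :=
    ⟨hMmeas.aestronglyMeasurable, lt_of_le_of_lt (hcob n hn) ENNReal.ofReal_lt_top⟩
  have hMint : Integrable M μΔ := hMp.integrable hp1
  -- ∫ M ≤ C₀ n^{1/p}
  have hIntM : ∫ y, M y ∂μΔ ≤ C₀ * (n:ℝ) ^ (1/p) := by
    have h1 : eLpNorm M 1 μΔ ≤ ENNReal.ofReal (C₀ * (n:ℝ)^(1/p)) :=
      le_trans (eLpNorm_le_eLpNorm_of_exponent_le hp1 hMmeas.aestronglyMeasurable)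
        (hcob n hn)
    have h2 : ∫ y, M y ∂μΔ = (eLpNorm M 1 μΔ).toReal := by
      rw [integral_eq_lintegral_of_nonneg_ae (Filter.Eventually.of_forall hM0)
        hMmeas.aestronglyMeasurable, eLpNorm_one_eq_lintegral_enorm]
      congr 1
      refine lintegral_congr fun y => ?_
      rw [← ofReal_norm_eq_enorm, Real.norm_of_nonneg (hM0 y)]
    rw [h2]
    calc (eLpNorm M 1 μΔ).toReal ≤ (ENNReal.ofReal (C₀ * (n:ℝ)^(1/p))).toReal :=
        ENNReal.toReal_mono ENNReal.ofReal_ne_top h1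
      _ = C₀ * (n:ℝ)^(1/p) := ENNReal.toReal_ofReal
          (by positivity)
  -- iterated decomposition a.e.
  have hdecIter : ∀ j : ℕ, ∀ᵐ y ∂μΔ,
      v (π (f^[j] y)) = m (f^[j] y) + χ (f^[j+1] y) - χ (f^[j] y) := by
    intro j
    have hAset : MeasurableSet {y | v (π y) = m y + χ (f y) - χ y} :=
      measurableSet_eq_fun (hv.comp hπ.measurable)
        ((hm.add (hχ.comp hf.measurable)).sub hχ)
    have hmp : MeasurePreserving f^[j] μΔ μΔ := hf.iterate j
    have h0 : μΔ {y | ¬ (v (π y) = m y + χ (f y) - χ y)} = 0 := ae_iff.mp hdec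
    have h1 : μΔ {y | ¬ (v (π (f^[j] y)) = m (f^[j] y) + χ (f (f^[j] y)) - χ (f^[j] y))}
        = 0 := by
      have hpre : {y | ¬ (v (π (f^[j] y)) = m (f^[j] y) + χ (f (f^[j] y)) - χ (f^[j] y))}
          = f^[j] ⁻¹' {y | ¬ (v (π y) = m y + χ (f y) - χ y)} := rfl
      rw [hpre]
      exact (hmp.measure_preimage hAset.compl.nullMeasurableSet).trans h0
    have h2 : ∀ᵐ y ∂μΔ, v (π (f^[j] y)) = m (f^[j] y) + χ (f (f^[j] y)) - χ (f^[j] y) :=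
      ae_iff.mpr h1
    filter_upwards [h2] with y hy
    rw [← Function.iterate_succ_apply' f j y] at hy
    exact hy
  have hae : ∀ᵐ y ∂μΔ, ∀ j : ℕ,
      v (π (f^[j] y)) = m (f^[j] y) + χ (f^[j+1] y) - χ (f^[j] y) :=
    ae_all_iff.mpr hdecIter
  -- semiconjugacy on iterates
  have hsemiIter : ∀ j : ℕ, ∀ y, T^[j] (π y) = π (f^[j] y) := by
    intro j
    induction j with
    | zero => intro y; simp
    | succ j ih =>
      intro y
      rw [Function.iterate_succ_apply', Function.iterate_succ_apply', ih y]
      exact congrFun hsemi (f^[j] y)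
  -- key pointwise bound
  have key : ∀ᵐ y ∂μΔ,
      |F (birkhoffPath T v n (π y)) - F (birkhoffPath f m n y)| ≤ c * M y := by
    filter_upwards [hae] with y hy
    refine F_dist_le F hF fun t ht => ?_
    set k : ℕ := ⌊(n:ℝ)*t⌋₊ with hkdef
    have hkn : k ≤ n := floor_le_of_mem_Icc n ht
    set θ : ℝ := (n:ℝ)*t - k with hθdef
    have hθ0 : 0 ≤ θ := theta_nonneg n ht
    have hθ1 : θ ≤ 1 := theta_le_one n t
    set A : EuclideanSpace ℝ (Fin N) := χ (f^[k] y) - χ y with hAdef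
    set B : EuclideanSpace ℝ (Fin N) := χ (f^[k+1] y) - χ y with hBdef
    have hsum : ∑ j ∈ Finset.range k, v (T^[j] (π y)) =
        (∑ j ∈ Finset.range k, m (f^[j] y)) + A := by
      have : ∀ j ∈ Finset.range k, v (T^[j] (π y)) =
          m (f^[j] y) + (χ (f^[j+1] y) - χ (f^[j] y)) := by
        intro j _
        rw [hsemiIter j y, hy j]
        abel
      rw [Finset.sum_congr rfl this, Finset.sum_add_distrib,
        Finset.sum_range_sub (fun j => χ (f^[j] y)) k]
      simp [hAdef]
    have hlast : v (T^[k] (π y)) - m (f^[k] y) = B - A := by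
      rw [hsemiIter k y, hy k]
      simp only [hAdef, hBdef]
      abel
    have hdiff : birkhoffPath T v n (π y) t - birkhoffPath f m n y t =
        c • ((1 - θ) • A + θ • B) := by
      simp only [birkhoffPath, ← hcdef, ← hkdef, ← hθdef]
      rw [hsum]
      have h3 : v (T^[k] (π y)) = m (f^[k] y) + (B - A) := by
        rw [← hlast]; abel
      rw [h3]
      module
    rw [hdiff]
    have hnormA : k ≠ 0 → ‖A‖ ≤ M y := fun hk0 =>
      hMle y k (Nat.one_le_iff_ne_zero.mpr hk0) hkn
    have hmain : ‖(1 - θ) • A + θ • B‖ ≤ M y := by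
      rcases Nat.eq_zero_or_pos k with hk0 | hk1
      · have hA : A = 0 := by simp [hAdef, hk0]
        have hB : ‖B‖ ≤ M y := by
          have : k + 1 = 1 := by omega
          rw [hBdef, this]
          exact hMle y 1 le_rfl hn
        rw [hA, smul_zero, zero_add, norm_smul, Real.norm_eq_abs, abs_of_nonneg hθ0]
        nlinarith [hM0 y, norm_nonneg B]
      · have hA : ‖A‖ ≤ M y := hMle y k hk1 hkn
        rcases eq_or_lt_of_le hkn with hkeq | hklt
        · have hθz : θ = 0 := by
            have h1 : (n:ℝ) * t ≤ n := by
              rcases ht with ⟨ht0, ht1⟩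
              nlinarith [Nat.cast_nonneg (α := ℝ) n]
            have h2 : (k:ℝ) ≤ (n:ℝ) * t := Nat.floor_le
              (mul_nonneg (Nat.cast_nonneg n) ht.1)
            have h3 : (k:ℝ) = (n:ℝ) := by exact_mod_cast hkeq
            simp only [hθdef]
            linarith
          rw [hθz]
          simpa using hA
        · have hB : ‖B‖ ≤ M y := hMle y (k+1) (by omega) (by omega)
          calc ‖(1 - θ) • A + θ • B‖ ≤ ‖(1 - θ) • A‖ + ‖θ • B‖ := norm_add_le _ _
            _ = (1 - θ) * ‖A‖ + θ * ‖B‖ := by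
                rw [norm_smul, norm_smul, Real.norm_eq_abs, Real.norm_eq_abs,
                  abs_of_nonneg hθ0, abs_of_nonneg (by linarith : (0:ℝ) ≤ 1 - θ)]
            _ ≤ (1 - θ) * M y + θ * M y :=
                add_le_add (mul_le_mul_of_nonneg_left hA (by linarith))
                  (mul_le_mul_of_nonneg_left hB hθ0)
            _ = M y := by ring
    rw [norm_smul, Real.norm_eq_abs, abs_of_nonneg hc0]
    exact mul_le_mul_of_nonneg_left hmain hc0
  -- measurability / integrability
  have hA'meas : Measurable fun y => F (birkhoffPath T v n (π y)) :=
    (measurable_F_birkhoff hT.measurable hv n F hF).comp hπ.measurable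
  have hBmeas : Measurable fun y => F (birkhoffPath f m n y) :=
    measurable_F_birkhoff hf.measurable hm n F hF
  set R₀ : ℝ := |F (fun _ => 0)| + ((n:ℝ)+1) * max Cv 0 with hR₀
  have hA'int : Integrable (fun y => F (birkhoffPath T v n (π y))) μΔ := by
    refine Integrable.mono' (integrable_const R₀) hA'meas.aestronglyMeasurable ?_
    filter_upwards with y
    rw [Real.norm_eq_abs]
    exact F_birkhoff_bound hvb n F hF (π y)
  have hGint : Integrable (fun y => c * M y) μΔ := hMint.const_mul c
  have hDiffint : Integrable
      (fun y => F (birkhoffPath T v n (π y)) - F (birkhoffPath f m n y)) μΔ := by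
    refine Integrable.mono' hGint (hA'meas.sub hBmeas).aestronglyMeasurable ?_
    filter_upwards [key] with y hy
    rw [Real.norm_eq_abs]
    exact hy
  have hBint : Integrable (fun y => F (birkhoffPath f m n y)) μΔ := by
    have : (fun y => F (birkhoffPath f m n y)) = fun y =>
        F (birkhoffPath T v n (π y)) -
          (F (birkhoffPath T v n (π y)) - F (birkhoffPath f m n y)) := by
      funext y; ring
    rw [this]
    exact hA'int.sub hDiffint
  -- change of variables
  have hCoV : ∫ x, F (birkhoffPath T v n x) ∂μX =
      ∫ y, F (birkhoffPath T v n (π y)) ∂μΔ := by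
    rw [← hπ.map_eq, integral_map hπ.measurable.aemeasurable]
    rw [hπ.map_eq]
    exact (measurable_F_birkhoff hT.measurable hv n F hF).aestronglyMeasurable
  rw [hCoV]
  -- final estimate
  have hfinal : |(∫ y, F (birkhoffPath T v n (π y)) ∂μΔ) -
      ∫ y, F (birkhoffPath f m n y) ∂μΔ| ≤ c * (C₀ * (n:ℝ)^(1/p)) := by
    rw [← integral_sub hA'int hBint]
    calc |∫ y, (F (birkhoffPath T v n (π y)) - F (birkhoffPath f m n y)) ∂μΔ|
        ≤ ∫ y, |F (birkhoffPath T v n (π y)) - F (birkhoffPath f m n y)| ∂μΔ := by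
          simpa [Real.norm_eq_abs] using
            norm_integral_le_integral_norm
              (fun y => F (birkhoffPath T v n (π y)) - F (birkhoffPath f m n y)) (μ := μΔ)
      _ ≤ ∫ y, c * M y ∂μΔ := integral_mono_ae hDiffint.abs hGint key
      _ = c * ∫ y, M y ∂μΔ := integral_const_mul c M
      _ ≤ c * (C₀ * (n:ℝ)^(1/p)) := mul_le_mul_of_nonneg_left hIntM hc0
  refine le_trans hfinal (le_of_eq ?_)
  rw [hcdef, mul_comm ((n:ℝ) ^ (-(1/2:ℝ))), mul_assoc, ← Real.rpow_add hn0]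
  congr 2
  field_simp
  ring
end

section
/- Let (X, μ_X) and (Δ, μ_Δ) be probability spaces, T : X → X and f : Δ → Δ measurable measure-preserving maps, and π : Δ → X a measurable measure-preserving map with T∘π = π∘f. Let v : X → ℝ be bounded measurable and let m, χ ∈ L^∞(μ_Δ; ℝ) with v∘π = m + χ∘f − χ everywhere on Δ. Define B_n : X → C([0,1], ℝ) by B_n(x)(k/n) = n^{−1/2} Σ_{j=0}^{k−1} v(T^j x) for 0 ≤ k ≤ n with linear interpolation, define Y_n : Δ → C([0,1], ℝ) by Y_n(y)(k/n) = n^{−1/2} Σ_{j=1}^{k} m(f^{n−j} y) for 0 ≤ k ≤ n with linear interpolation, and let h : C([0,1],ℝ) → C([0,1],ℝ) be (h g)(t) = g(1) − g(1−t). Then sup_{t∈[0,1]} |(h(B_n(π(y))))(t) − (Y_n(y))(t)| ≤ 2 n^{−1/2} ‖χ‖_∞ for all y ∈ Δ; consequently there is C > 0 such that the Lévy–Prokhorov distance between the laws of h∘B_n∘π and of Y_n satisfies Π(h∘B_n∘π, Y_n) ≤ C n^{−1/2} for all n ≥ 1. -/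
open MeasureTheory
open scoped ENNReal NNReal

/-- The piecewise-linear path which at `t = k/n` equals `n^{-1/2} Σ_{j=1}^{k} m(f^{n−j} y)`
and is linear in between. -/
noncomputable def reversedMartingalePath {α E : Type*} [NormedAddCommGroup E] [NormedSpace ℝ E]
    (f : α → α) (m : α → E) (n : ℕ) (y : α) : ℝ → E :=
  fun t => ((n : ℝ) ^ (-(1 / 2 : ℝ))) •
    ((∑ j ∈ Finset.Icc 1 ⌊(n : ℝ) * t⌋₊, m (f^[n - j] y)) +
      ((n : ℝ) * t - ⌊(n : ℝ) * t⌋₊) • m (f^[n - (⌊(n : ℝ) * t⌋₊ + 1)] y))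

/-- The time-reversal operator `(h g)(t) = g(1) − g(1−t)`. -/
def timeReversal {E : Type*} [SubtractionMonoid E] (g : ℝ → E) : ℝ → E :=
  fun t => g 1 - g (1 - t)

/-- The Lévy–Prokhorov distance `Π(μ,ν) = inf {ε > 0 : μ(B) ≤ ν(B^ε) + ε for all Borel B}`,
with respect to a given (extended) distance `d`. -/
noncomputable def prokhorovDist {S : Type*} [MeasurableSpace S] (d : S → S → ℝ≥0∞)
    (μ ν : Measure S) : ℝ :=
  sInf {ε : ℝ | 0 < ε ∧ ∀ B : Set S, MeasurableSet B →
    μ B ≤ ν {y | ∃ x ∈ B, d x y < ENNReal.ofReal ε} + ENNReal.ofReal ε}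

/-- With `v∘π = m + χ∘f − χ` and bounded `m, χ`, the time-reversed Birkhoff
process `h∘B_n∘π` is uniformly within `2 n^{-1/2} ‖χ‖_∞` of the reversed martingale process
`Y_n`; consequently `Π(h∘B_n∘π, Y_n) ≤ C n^{-1/2}`. -/
theorem prokhorov_reversed_birkhoff_vs_reversed_martingale
    {X Δ : Type*} [MeasurableSpace X] [MeasurableSpace Δ]
    (μX : Measure X) [IsProbabilityMeasure μX] (μΔ : Measure Δ) [IsProbabilityMeasure μΔ]
    (T : X → X) (hT : MeasurePreserving T μX μX)
    (f : Δ → Δ) (hf : MeasurePreserving f μΔ μΔ)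
    (π : Δ → X) (hπ : MeasurePreserving π μΔ μX) (hsemi : T ∘ π = π ∘ f)
    (v : X → ℝ) (hv : Measurable v) (Cv : ℝ) (hvb : ∀ x, |v x| ≤ Cv)
    (m χ : Δ → ℝ) (hm : Measurable m) (hχ : Measurable χ)
    (Cm : ℝ) (hmb : ∀ y, |m y| ≤ Cm) (Cχ : ℝ) (hχb : ∀ y, |χ y| ≤ Cχ)
    (hdec : ∀ y, v (π y) = m y + χ (f y) - χ y) :
    (∀ (n : ℕ), 1 ≤ n → ∀ y, ∀ t ∈ Set.Icc (0 : ℝ) 1,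
      |timeReversal (birkhoffPath T v n (π y)) t - reversedMartingalePath f m n y t|
        ≤ 2 * (n : ℝ) ^ (-(1 / 2 : ℝ)) * Cχ) ∧
    ∃ C > (0 : ℝ), ∀ n : ℕ, 1 ≤ n →
      prokhorovDist supEDist01
          (μΔ.map fun y => timeReversal (birkhoffPath T v n (π y)))
          (μΔ.map fun y => reversedMartingalePath f m n y)
        ≤ C * (n : ℝ) ^ (-(1 / 2 : ℝ)) := by
  have key : ∀ (n : ℕ), 1 ≤ n → ∀ y, ∀ t ∈ Set.Icc (0 : ℝ) 1,
      |timeReversal (birkhoffPath T v n (π y)) t - reversedMartingalePath f m n y t|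
        ≤ 2 * (n : ℝ) ^ (-(1 / 2 : ℝ)) * Cχ := by
    intro n hn y t ht
    obtain ⟨ht0, ht1⟩ := ht
    set c : ℝ := (n : ℝ) ^ (-(1/2 : ℝ)) with hc_def
    have hnpos : (0:ℝ) < n := by exact_mod_cast hn
    have hc : 0 < c := Real.rpow_pos_of_pos hnpos _
    have hCχ : 0 ≤ Cχ := (abs_nonneg _).trans (hχb y)
    have hsc : ∀ j, T^[j] (π y) = π (f^[j] y) := by
      intro j
      have hsj : Function.Semiconj π f T := fun a => (congrFun hsemi a).symm
      exact ((hsj.iterate_right j) y).symm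
    have hw : ∀ j, v (T^[j] (π y)) = m (f^[j] y) + χ (f^[j+1] y) - χ (f^[j] y) := by
      intro j
      rw [hsc j, hdec]
      rw [← Function.iterate_succ_apply' f j y]
    set M : ℕ → ℝ := fun k => ∑ j ∈ Finset.range k, m (f^[j] y) with hM_def
    have hMsucc : ∀ k, M (k+1) = M k + m (f^[k] y) := fun k => Finset.sum_range_succ _ _
    have hS : ∀ k, ∑ j ∈ Finset.range k, v (T^[j] (π y)) = M k + χ (f^[k] y) - χ y := by
      intro k
      induction k with
      | zero => simp [hM_def]
      | succ k ih =>
        rw [Finset.sum_range_succ, ih, hw k, hMsucc k]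
        ring
    have hIcc : ∀ k, k ≤ n → ∑ j ∈ Finset.Icc 1 k, m (f^[n-j] y) = M n - M (n - k) := by
      intro k hk
      induction k with
      | zero => simp
      | succ k ih =>
        have hk' : k ≤ n := Nat.le_of_succ_le hk
        rw [Finset.sum_Icc_succ_top (by omega : 1 ≤ k + 1), ih hk']
        have h1 : n - k = (n - (k+1)) + 1 := by omega
        have h2 : M (n - k) = M (n - (k+1)) + m (f^[n - (k+1)] y) := by
          rw [h1, hMsucc]
        rw [h2]; ring
    have hg1 : birkhoffPath T v n (π y) 1 = c • (M n + χ (f^[n] y) - χ y) := by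
      unfold birkhoffPath
      rw [mul_one, Nat.floor_natCast, hS n]
      simp only [sub_self, zero_smul, add_zero]
      rfl
    set u : ℝ := (n : ℝ) * t with hu_def
    have hu0 : 0 ≤ u := mul_nonneg (Nat.cast_nonneg n) ht0
    have hun : u ≤ n := by
      have := mul_le_mul_of_nonneg_left ht1 (Nat.cast_nonneg (α := ℝ) n)
      simpa [hu_def] using this
    set k : ℕ := ⌊u⌋₊ with hk_def
    have hkn : k ≤ n := by
      have h := Nat.floor_le_floor (R := ℝ) hun
      simpa [hk_def] using h
    have hθ0 : (k:ℝ) ≤ u := Nat.floor_le hu0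
    have hθ1 : u < k + 1 := Nat.lt_floor_add_one u
    have hnt : (n : ℝ) * (1 - t) = (n : ℝ) - u := by rw [hu_def]; ring
    have hY : reversedMartingalePath f m n y t
        = c • ((M n - M (n - k)) + (u - k) • m (f^[n - (k+1)] y)) := by
      unfold reversedMartingalePath
      rw [← hu_def, ← hk_def, hIcc k hkn]
    rcases eq_or_lt_of_le hθ0 with hθ | hθ
    · -- u = k exactly
      have hcast : ((n - k : ℕ) : ℝ) = (n : ℝ) - k := by
        rw [Nat.cast_sub hkn]
      have hfl : ⌊(n : ℝ) * (1 - t)⌋₊ = n - k := by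
        rw [hnt, ← hθ, ← hcast, Nat.floor_natCast]
      have hg2 : birkhoffPath T v n (π y) (1 - t)
          = c • (M (n - k) + χ (f^[n - k] y) - χ y) := by
        unfold birkhoffPath
        rw [hfl, hS (n - k)]
        rw [hnt, ← hθ, hcast]
        simp only [sub_self, zero_smul, add_zero]
        rfl
      rw [timeReversal, hg1, hg2, hY, ← hθ]
      simp only [smul_eq_mul, sub_self, zero_mul, mul_zero, add_zero, zero_smul]
      have : c * (M n + χ (f^[n] y) - χ y) - c * (M (n - k) + χ (f^[n - k] y) - χ y)
          - c * (M n - M (n - k)) = c * (χ (f^[n] y) - χ (f^[n - k] y)) := by ring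
      rw [this, abs_mul, abs_of_pos hc]
      have h1 := abs_le.mp (hχb (f^[n] y))
      have h2 := abs_le.mp (hχb (f^[n - k] y))
      have habs : |χ (f^[n] y) - χ (f^[n - k] y)| ≤ 2 * Cχ := by
        rw [abs_le]; constructor <;> linarith [h1.1, h1.2, h2.1, h2.2]
      calc c * |χ (f^[n] y) - χ (f^[n - k] y)| ≤ c * (2 * Cχ) :=
            mul_le_mul_of_nonneg_left habs hc.le
        _ = 2 * c * Cχ := by ring
    · -- k < u, fractional case
      have hkn' : k < n := by
        have : (k : ℝ) < (n : ℝ) := lt_of_lt_of_le hθ hun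
        exact_mod_cast this
      have hk1 : k + 1 ≤ n := hkn'
      have hcast : ((n - (k+1) : ℕ) : ℝ) = (n : ℝ) - (k + 1) := by
        rw [Nat.cast_sub hk1]; push_cast; ring
      have hfl : ⌊(n : ℝ) * (1 - t)⌋₊ = n - (k+1) := by
        rw [hnt]
        rw [Nat.floor_eq_iff (by linarith)]
        rw [hcast]
        constructor
        · linarith
        · linarith
      have hsucc : (n - (k+1)) + 1 = n - k := by omega
      have hg2 : birkhoffPath T v n (π y) (1 - t)
          = c • ((M (n - (k+1)) + χ (f^[n - (k+1)] y) - χ y)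
              + ((k:ℝ) + 1 - u) • (m (f^[n - (k+1)] y) + χ (f^[n - k] y) - χ (f^[n - (k+1)] y))) := by
        unfold birkhoffPath
        rw [hfl, hS (n - (k+1)), hw (n - (k+1)), hsucc, hnt, hcast]
        rw [hc_def]
        ring_nf
      have hMnk : M (n - k) = M (n - (k+1)) + m (f^[n - (k+1)] y) := by
        rw [← hsucc, hMsucc]
      rw [timeReversal, hg1, hg2, hY, hMnk]
      simp only [smul_eq_mul]
      set a := χ (f^[n] y) with ha_def
      set b := χ (f^[n - k] y) with hb_def
      set d := χ (f^[n - (k+1)] y) with hd_def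
      set mm := m (f^[n - (k+1)] y) with hmm_def
      have heq : c * (M n + a - χ y)
          - c * (M (n - (k+1)) + d - χ y + ((k:ℝ) + 1 - u) * (mm + b - d))
          - c * (M n - (M (n - (k+1)) + mm) + (u - k) * mm)
          = c * (a - ((k:ℝ) + 1 - u) * b - (u - k) * d) := by ring
      rw [heq, abs_mul, abs_of_pos hc]
      have h1 := abs_le.mp (hχb (f^[n] y))
      have h2 := abs_le.mp (hχb (f^[n - k] y))
      have h3 := abs_le.mp (hχb (f^[n - (k+1)] y))
      rw [← ha_def] at h1
      rw [← hb_def] at h2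
      rw [← hd_def] at h3
      have t1 : (0:ℝ) ≤ (k:ℝ) + 1 - u := by linarith
      have t2 : (0:ℝ) ≤ u - (k:ℝ) := by linarith
      have e1 := mul_le_mul_of_nonneg_left h2.1 t1
      have e2 := mul_le_mul_of_nonneg_left h2.2 t1
      have e3 := mul_le_mul_of_nonneg_left h3.1 t2
      have e4 := mul_le_mul_of_nonneg_left h3.2 t2
      have e5 : ((k:ℝ) + 1 - u) * Cχ + (u - (k:ℝ)) * Cχ = Cχ := by ring
      have e6 : ((k:ℝ) + 1 - u) * (-Cχ) + (u - (k:ℝ)) * (-Cχ) = -Cχ := by ring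
      have habs : |a - ((k:ℝ) + 1 - u) * b - (u - k) * d| ≤ 2 * Cχ := by
        rw [abs_le]
        constructor <;> linarith [h1.1, h1.2, e1, e2, e3, e4, e5, e6]
      calc c * |a - ((k:ℝ) + 1 - u) * b - (u - k) * d| ≤ c * (2 * Cχ) :=
            mul_le_mul_of_nonneg_left habs hc.le
        _ = 2 * c * Cχ := by ring
  refine ⟨key, ?_⟩
  have hNE : Nonempty Δ := by
    by_contra h
    rw [not_nonempty_iff] at h
    have h1 : μΔ Set.univ = 1 := measure_univ
    rw [Set.univ_eq_empty_iff.mpr h, measure_empty] at h1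
    exact zero_ne_one h1
  obtain ⟨y0⟩ := hNE
  have hCχ : 0 ≤ Cχ := (abs_nonneg _).trans (hχb y0)
  refine ⟨2 * Cχ + 1, by linarith, ?_⟩
  intro n hn
  set c : ℝ := (n : ℝ) ^ (-(1/2 : ℝ)) with hc_def
  have hnpos : (0:ℝ) < n := by exact_mod_cast hn
  have hc : 0 < c := Real.rpow_pos_of_pos hnpos _
  have hB : ∀ s : ℝ, Measurable (fun y : Δ => birkhoffPath T v n (π y) s) := by
    intro s
    unfold birkhoffPath
    refine Measurable.fun_smul measurable_const (Measurable.fun_add ?_ ?_)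
    · exact Finset.measurable_sum _ fun j _ => hv.comp ((hT.measurable.iterate j).comp hπ.measurable)
    · exact Measurable.fun_smul measurable_const (hv.comp ((hT.measurable.iterate _).comp hπ.measurable))
  have hXm : Measurable (fun y : Δ => timeReversal (birkhoffPath T v n (π y))) := by
    apply measurable_pi_lambda
    intro t
    exact (hB 1).sub (hB (1 - t))
  have hYm : Measurable (fun y : Δ => reversedMartingalePath f m n y) := by
    apply measurable_pi_lambda
    intro t
    unfold reversedMartingalePath
    refine Measurable.fun_smul measurable_const (Measurable.fun_add ?_ ?_)
    · exact Finset.measurable_sum _ fun j _ => hm.comp (hf.measurable.iterate _)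
    · exact Measurable.fun_smul measurable_const (hm.comp (hf.measurable.iterate _))
  set ε : ℝ := (2 * Cχ + 1) * c with hε_def
  have hεpos : 0 < ε := by positivity
  apply csInf_le
  · exact ⟨0, fun x hx => hx.1.le⟩
  refine ⟨hεpos, fun B hBmeas => ?_⟩
  rw [Measure.map_apply hXm hBmeas]
  set XX : Δ → (ℝ → ℝ) := fun y => timeReversal (birkhoffPath T v n (π y)) with hXX
  set YY : Δ → (ℝ → ℝ) := fun y => reversedMartingalePath f m n y with hYY
  have hsub : XX ⁻¹' B ⊆ YY ⁻¹' {z | ∃ x ∈ B, supEDist01 x z < ENNReal.ofReal ε} := by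
    intro y hy
    refine ⟨XX y, hy, ?_⟩
    have hlt : 2 * c * Cχ < ε := by
      rw [hε_def]; nlinarith
    calc supEDist01 (XX y) (YY y) ≤ ENNReal.ofReal (2 * c * Cχ) := by
          apply iSup_le
          rintro ⟨t, htmem⟩
          rw [edist_dist, Real.dist_eq]
          exact ENNReal.ofReal_le_ofReal (key n hn y t htmem)
      _ < ENNReal.ofReal ε := (ENNReal.ofReal_lt_ofReal_iff hεpos).mpr hlt
  calc μΔ (XX ⁻¹' B)
      ≤ μΔ (YY ⁻¹' {z | ∃ x ∈ B, supEDist01 x z < ENNReal.ofReal ε}) := measure_mono hsub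
    _ ≤ (μΔ.map YY) {z | ∃ x ∈ B, supEDist01 x z < ENNReal.ofReal ε} :=
        Measure.le_map_apply hYm.aemeasurable _
    _ ≤ _ := le_self_add
end
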